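/- Let $r = \frac{1 + \sqrt{7}}{4} + i\,\frac{-1 + \sqrt{7}}{4}$ (note $|r| = 1$). For complex numbers $z_1, z_2, z_3, z_4$, define $D(z_1, z_2, z_3, z_4) = r(|z_3|^2 + |z_4|^2) - i\overline{r}(|z_1|^2 + |z_2|^2) + (z_1\overline{z_3} + z_2\overline{z_4}) - i(\overline{z_1} z_3 + \overline{z_2} z_4)$. Then for all Gaussian integers $z_1, z_2, z_3, z_4$, not all zero, $|D(z_1, z_2, z_3, z_4)|^2 \geq 1/2$; moreover there exist Gaussian integers $z_1, z_2, z_3, z_4$, not all zero, with $|D(z_1, z_2, z_3, z_4)|^2 = 1/2$ (for instance $z_1 = z_4 = 1$, $z_2 = z_3 = 0$). -/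

import Mathlib

open Complex ComplexConjugate

/-- A Gaussian integer: a complex number whose real and imaginary parts are integers. -/
def IsGaussianInt (z : ℂ) : Prop := ∃ a b : ℤ, z = (a : ℂ) + (b : ℂ) * Complex.I

/-- The optimized design coefficient `r = (1+√7)/4 + i(-1+√7)/4`. -/
noncomputable def rOpt : ℂ :=
  (((1 + Real.sqrt 7) / 4 : ℝ) : ℂ) + (((-1 + Real.sqrt 7) / 4 : ℝ) : ℂ) * Complex.I

/-- Determinant of the codeword difference matrix of the code `X` with design coefficient `rOpt`. -/
noncomputable def Ddet (z₁ z₂ z₃ z₄ : ℂ) : ℂ :=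
  rOpt * ((Complex.normSq z₃ : ℂ) + (Complex.normSq z₄ : ℂ)) -
    Complex.I * conj rOpt * ((Complex.normSq z₁ : ℂ) + (Complex.normSq z₂ : ℂ)) +
    (z₁ * conj z₃ + z₂ * conj z₄) -
    Complex.I * (conj z₁ * z₃ + conj z₂ * z₄)

/-!
With `M = |z₃|² + |z₄|²`, `N = |z₁|² + |z₂|²` and `K = Re ((1 + i)(z₁ z̄₃ + z₂ z̄₄))` one has
`D = (1 - i)((M + N)/4 + K) + (1 + i) √7 (M - N)/4`, hence `8 |D|² = 7 (M - N)² + (M + N + 4K)²`.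
For Gaussian integers `M`, `N`, `K` are integers, so the right side is at least `4` unless
`M = N` and `N + 2K = 0`. In that case reducing modulo `4` shows that `1 + i` divides every `zⱼ`;
dividing by `1 + i` halves `M`, `N` and `K`, so by infinite descent all `zⱼ` vanish.
-/

theorem sub_I_mul_conj (S : ℂ) : S - I * conj S = (1 - I) * (((1 + I) * S).re : ℂ) := by
  apply Complex.ext <;> simp

theorem normSq_one_sub_I_mul_add (a b : ℝ) :
    normSq ((1 - I) * a + (1 + I) * b) = 2 * a ^ 2 + 2 * b ^ 2 := by
  simp [normSq_apply]; ring

theorem Ddet_eq (z₁ z₂ z₃ z₄ : ℂ) :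
    Ddet z₁ z₂ z₃ z₄ =
      (1 - I) * (((normSq z₁ + normSq z₂ + normSq z₃ + normSq z₄) / 4 +
          ((1 + I) * (z₁ * conj z₃ + z₂ * conj z₄)).re : ℝ) : ℂ) +
        (1 + I) * ((Real.sqrt 7 * (normSq z₃ + normSq z₄ - normSq z₁ - normSq z₂) / 4 : ℝ) : ℂ) := by
  have hS := sub_I_mul_conj (z₁ * conj z₃ + z₂ * conj z₄)
  simp only [map_add, map_mul, conj_conj] at hS
  rw [Ddet, add_sub_assoc, hS]
  simp only [rOpt, map_add, map_mul, conj_ofReal, conj_I]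
  apply Complex.ext <;> simp <;> ring

theorem normSq_Ddet (z₁ z₂ z₃ z₄ : ℂ) :
    normSq (Ddet z₁ z₂ z₃ z₄) =
      (7 * (normSq z₃ + normSq z₄ - (normSq z₁ + normSq z₂)) ^ 2 +
        (normSq z₁ + normSq z₂ + normSq z₃ + normSq z₄ +
          4 * ((1 + I) * (z₁ * conj z₃ + z₂ * conj z₄)).re) ^ 2) / 8 := by
  rw [Ddet_eq, normSq_one_sub_I_mul_add]
  linear_combination (normSq z₃ + normSq z₄ - (normSq z₁ + normSq z₂)) ^ 2 / 8 *
    Real.sq_sqrt (show (0 : ℝ) ≤ 7 by norm_num)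

theorem four_le_seven_mul_sq_add_sq {M N K : ℤ} (h : ¬ (N = M ∧ N + 2 * K = 0)) :
    4 ≤ 7 * (M - N) ^ 2 + (N + M + 4 * K) ^ 2 := by
  by_cases hNM : N = M
  · subst hNM
    have : 1 ≤ |N + 2 * K| := Int.one_le_abs fun h0 => h ⟨rfl, h0⟩
    nlinarith [sq_abs (N + 2 * K)]
  · have : 1 ≤ |M - N| := Int.one_le_abs (sub_ne_zero.2 (Ne.symm hNM))
    nlinarith [sq_abs (M - N), sq_nonneg (N + M + 4 * K)]

theorem Int.sq_emod_four_eq_zero_or_one (x : ℤ) : x ^ 2 % 4 = 0 ∨ x ^ 2 % 4 = 1 := by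
  rcases Int.even_or_odd x with ⟨k, rfl⟩ | hx
  · exact Or.inl (Int.emod_eq_zero_of_dvd ⟨k ^ 2, by ring⟩)
  · exact Or.inr (Int.sq_mod_four_eq_one_of_odd hx)

local notation "ℤ[i]" => GaussianInt

namespace GaussianInt

def onePlusI : ℤ[i] := ⟨1, 1⟩

def crossTerm (a c : ℤ[i]) : ℤ := (onePlusI * a * star c).re

theorem norm_eq_sq_add_sq (a : ℤ[i]) : a.norm = a.re ^ 2 + a.im ^ 2 := by
  rw [Zsqrtd.norm_def]; ring

theorem even_norm_iff (a : ℤ[i]) : Even a.norm ↔ Even (a.re + a.im) := by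
  simp [norm_eq_sq_add_sq, parity_simps]

theorem onePlusI_dvd_iff (a : ℤ[i]) : onePlusI ∣ a ↔ Even (a.re + a.im) := by
  constructor
  · rintro ⟨w, rfl⟩
    exact ⟨w.re, by simp [onePlusI]⟩
  · rintro ⟨k, hk⟩
    exact ⟨⟨k, k - a.re⟩, by ext <;> simp [onePlusI]; omega⟩

theorem onePlusI_dvd_of_four_dvd_norm_add {a b : ℤ[i]} (h : 4 ∣ a.norm + b.norm) :
    onePlusI ∣ a ∧ onePlusI ∣ b := by
  rw [onePlusI_dvd_iff, onePlusI_dvd_iff, ← even_norm_iff, ← even_norm_iff, Int.even_iff,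
    Int.even_iff, norm_eq_sq_add_sq, norm_eq_sq_add_sq] at *
  have := Int.sq_emod_four_eq_zero_or_one a.re
  have := Int.sq_emod_four_eq_zero_or_one a.im
  have := Int.sq_emod_four_eq_zero_or_one b.re
  have := Int.sq_emod_four_eq_zero_or_one b.im
  omega

theorem crossTerm_eq (a c : ℤ[i]) :
    crossTerm a c = (a.re + a.im) * (c.re + c.im) - 2 * a.im * c.re := by
  simp [crossTerm, onePlusI]; ring

theorem even_crossTerm_add {a b c d : ℤ[i]} (hab : Even (a.norm + b.norm))
    (hcd : Even (c.norm + d.norm)) : Even (crossTerm a c + crossTerm b d) := by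
  simp only [Int.even_add, even_norm_iff] at hab hcd
  simp only [crossTerm_eq, Int.even_add, Int.even_sub, Int.even_mul, even_two, true_or,
    iff_true, hab, hcd]

theorem norm_onePlusI_mul (a : ℤ[i]) : (onePlusI * a).norm = 2 * a.norm := by
  rw [Zsqrtd.norm_mul]; rfl

theorem crossTerm_onePlusI_mul (a c : ℤ[i]) :
    crossTerm (onePlusI * a) (onePlusI * c) = 2 * crossTerm a c := by
  simp [crossTerm, onePlusI]; ring

theorem eq_zero_of_norm_add_eq_zero {a b : ℤ[i]} (h : a.norm + b.norm = 0) :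
    a = 0 ∧ b = 0 := by
  have ha := norm_nonneg a
  have hb := norm_nonneg b
  exact ⟨norm_eq_zero.1 (by omega), norm_eq_zero.1 (by omega)⟩

/-- `M = N` and `N + 2K = 0` in the notation of the header: the integer conditions for `Ddet` to
vanish. -/
def IsIsotropic (z₁ z₂ z₃ z₄ : ℤ[i]) : Prop :=
  z₁.norm + z₂.norm = z₃.norm + z₄.norm ∧
    z₁.norm + z₂.norm + 2 * (crossTerm z₁ z₃ + crossTerm z₂ z₄) = 0

theorem IsIsotropic.onePlusI_dvd {z₁ z₂ z₃ z₄ : ℤ[i]} (h : IsIsotropic z₁ z₂ z₃ z₄) :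
    (onePlusI ∣ z₁ ∧ onePlusI ∣ z₂) ∧ (onePlusI ∣ z₃ ∧ onePlusI ∣ z₄) := by
  obtain ⟨hM, hK⟩ := h
  have hN : Even (z₁.norm + z₂.norm) := ⟨-(crossTerm z₁ z₃ + crossTerm z₂ z₄), by omega⟩
  obtain ⟨k, hk⟩ := even_crossTerm_add hN (hM ▸ hN)
  have h4 : 4 ∣ z₁.norm + z₂.norm := ⟨-k, by omega⟩
  exact ⟨onePlusI_dvd_of_four_dvd_norm_add h4, onePlusI_dvd_of_four_dvd_norm_add (hM ▸ h4)⟩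

theorem IsIsotropic.of_onePlusI_mul {w₁ w₂ w₃ w₄ : ℤ[i]}
    (h : IsIsotropic (onePlusI * w₁) (onePlusI * w₂) (onePlusI * w₃) (onePlusI * w₄)) :
    IsIsotropic w₁ w₂ w₃ w₄ := by
  simp only [IsIsotropic, norm_onePlusI_mul, crossTerm_onePlusI_mul] at h
  exact ⟨by omega, by omega⟩

theorem IsIsotropic.eq_zero {z₁ z₂ z₃ z₄ : ℤ[i]} (h : IsIsotropic z₁ z₂ z₃ z₄) :
    (z₁ = 0 ∧ z₂ = 0) ∧ (z₃ = 0 ∧ z₄ = 0) := by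
  rcases (add_nonneg (norm_nonneg z₁) (norm_nonneg z₂)).eq_or_lt with hN | hN
  · exact ⟨eq_zero_of_norm_add_eq_zero hN.symm, eq_zero_of_norm_add_eq_zero (h.1 ▸ hN.symm)⟩
  obtain ⟨⟨⟨w₁, rfl⟩, ⟨w₂, rfl⟩⟩, ⟨w₃, rfl⟩, ⟨w₄, rfl⟩⟩ := h.onePlusI_dvd
  have := h.of_onePlusI_mul.eq_zero
  simp_all
termination_by (z₁.norm + z₂.norm).toNat
decreasing_by subst_vars; simp only [norm_onePlusI_mul] at *; omega

theorem re_one_add_I_mul_conj (a c : ℤ[i]) :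
    ((1 + I) * ((a : ℂ) * conj (c : ℂ))).re = crossTerm a c := by
  have h : ((onePlusI : ℤ[i]) : ℂ) = 1 + I := by simp [onePlusI, toComplex_def']
  rw [crossTerm, intCast_re, toComplex_mul, toComplex_mul, toComplex_star, h, mul_assoc]

theorem normSq_Ddet_toComplex (w₁ w₂ w₃ w₄ : ℤ[i]) :
    normSq (Ddet w₁ w₂ w₃ w₄) =
      ((7 * (w₃.norm + w₄.norm - (w₁.norm + w₂.norm)) ^ 2 +
        (w₁.norm + w₂.norm + (w₃.norm + w₄.norm) + 4 * (crossTerm w₁ w₃ + crossTerm w₂ w₄)) ^ 2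
          : ℤ) : ℝ) / 8 := by
  rw [normSq_Ddet]
  simp only [← intCast_real_norm, mul_add, add_re, re_one_add_I_mul_conj]
  push_cast
  ring

end GaussianInt

theorem isGaussianInt_iff {z : ℂ} : IsGaussianInt z ↔ ∃ w : ℤ[i], (w : ℂ) = z := by
  constructor
  · rintro ⟨a, b, rfl⟩
    exact ⟨⟨a, b⟩, GaussianInt.toComplex_def' a b⟩
  · rintro ⟨w, rfl⟩
    exact ⟨w.re, w.im, GaussianInt.toComplex_def w⟩

theorem stmt_12 :
    (∀ z₁ z₂ z₃ z₄ : ℂ,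
      IsGaussianInt z₁ → IsGaussianInt z₂ → IsGaussianInt z₃ → IsGaussianInt z₄ →
      ¬ (z₁ = 0 ∧ z₂ = 0 ∧ z₃ = 0 ∧ z₄ = 0) →
      ‖Ddet z₁ z₂ z₃ z₄‖ ^ 2 ≥ 1 / 2) ∧
    (∃ z₁ z₂ z₃ z₄ : ℂ,
      IsGaussianInt z₁ ∧ IsGaussianInt z₂ ∧ IsGaussianInt z₃ ∧ IsGaussianInt z₄ ∧
      ¬ (z₁ = 0 ∧ z₂ = 0 ∧ z₃ = 0 ∧ z₄ = 0) ∧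
      ‖Ddet z₁ z₂ z₃ z₄‖ ^ 2 = 1 / 2) := by
  refine ⟨fun z₁ z₂ z₃ z₄ h₁ h₂ h₃ h₄ hz => ?_, 1, 0, 0, 1, ?_⟩
  · obtain ⟨w₁, rfl⟩ := isGaussianInt_iff.1 h₁
    obtain ⟨w₂, rfl⟩ := isGaussianInt_iff.1 h₂
    obtain ⟨w₃, rfl⟩ := isGaussianInt_iff.1 h₃
    obtain ⟨w₄, rfl⟩ := isGaussianInt_iff.1 h₄
    have hw : ¬ ((w₁ = 0 ∧ w₂ = 0) ∧ (w₃ = 0 ∧ w₄ = 0)) := by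
      rintro ⟨⟨rfl, rfl⟩, rfl, rfl⟩
      simp at hz
    have h4 := four_le_seven_mul_sq_add_sq fun h => hw (GaussianInt.IsIsotropic.eq_zero h)
    rw [Complex.sq_norm, GaussianInt.normSq_Ddet_toComplex, ge_iff_le, le_div_iff₀ (by norm_num)]
    calc (1 / 2 * 8 : ℝ) = 4 := by norm_num
      _ ≤ _ := by exact_mod_cast h4
  · refine ⟨⟨1, 0, by simp⟩, ⟨0, 0, by simp⟩, ⟨0, 0, by simp⟩, ⟨1, 0, by simp⟩, by simp, ?_⟩
    rw [Complex.sq_norm, normSq_Ddet]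
    norm_num
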